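/- arXiv:0802.0030 — 2 statements merged into one kernel-verified Lean document; each statement's English description precedes it below -/
import Mathlib

section
/- Let S, Z, W1, W2, U, V be random variables on a probability space with values in finite nonempty sets, and let t ≥ 0 be a real number. Suppose H(S | W1, W2, Z) = 0, H(S) ≥ H(Z) + 2t, H(W1, W2 | U, V) = 0, and H(U, V) ≤ 2t. Then H(W1, W2) = 2t, H(U, V) = 2t, and H(U, V | W1, W2) = 0 (so the pair (U, V) is a function of (W1, W2)). -/
/-!
As `S` is a function of `(W₁, W₂, Z)`, `H(S) ≤ H(W₁, W₂, Z) ≤ H(W₁, W₂) + H(Z)`, so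
`H(W₁, W₂) ≥ H(S) - H(Z) ≥ 2t`; as `(W₁, W₂)` is a function of `(U, V)`,
`H(W₁, W₂) ≤ H(U, V) ≤ 2t`. Hence both entropies equal `2t`, and
`H(U, V | W₁, W₂) = H(W₁, W₂, U, V) - H(W₁, W₂) = H(U, V) - H(W₁, W₂) = 0`.
Subadditivity of entropy is Gibbs' inequality against the product of the marginals.
-/

open MeasureTheory ProbabilityTheory

/-- Shannon entropy (natural logarithm) of a random variable with values in a finite type,
computed from the law `μ.map X`. -/
noncomputable def ent {Ω : Type*} [MeasurableSpace Ω] {S : Type*} [Fintype S] [MeasurableSpace S]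
    (μ : Measure Ω) (X : Ω → S) : ℝ :=
  ∑ s : S, Real.negMulLog ((μ.map X) {s}).toReal

/-- Conditional entropy `H(X | Y) = H(X, Y) - H(Y)`. -/
noncomputable def condEnt {Ω S T : Type*} [MeasurableSpace Ω] [Fintype S] [MeasurableSpace S]
    [Fintype T] [MeasurableSpace T] (μ : Measure Ω) (X : Ω → S) (Y : Ω → T) : ℝ :=
  ent μ (fun ω => (X ω, Y ω)) - ent μ Y

/-- Mutual information `I(X ; Y) = H(X) + H(Y) - H(X, Y)`. -/
noncomputable def mutInfo {Ω S T : Type*} [MeasurableSpace Ω] [Fintype S] [MeasurableSpace S]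
    [Fintype T] [MeasurableSpace T] (μ : Measure Ω) (X : Ω → S) (Y : Ω → T) : ℝ :=
  ent μ X + ent μ Y - ent μ (fun ω => (X ω, Y ω))

/-- Conditional mutual information `I(X ; Y | Z) = H(X | Z) + H(Y | Z) - H(X, Y | Z)`. -/
noncomputable def condMutInfo {Ω S T U : Type*} [MeasurableSpace Ω] [Fintype S] [MeasurableSpace S]
    [Fintype T] [MeasurableSpace T] [Fintype U] [MeasurableSpace U]
    (μ : Measure Ω) (X : Ω → S) (Y : Ω → T) (Z : Ω → U) : ℝ :=
  condEnt μ X Z + condEnt μ Y Z - condEnt μ (fun ω => (X ω, Y ω)) Z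

open Real Finset

lemma negMulLog_sum_le {ι : Type*} (s : Finset ι) {a : ι → ℝ} (ha : ∀ i ∈ s, 0 ≤ a i) :
    negMulLog (∑ i ∈ s, a i) ≤ ∑ i ∈ s, negMulLog (a i) := by
  rw [negMulLog, neg_mul, sum_mul, ← sum_neg_distrib]
  refine sum_le_sum fun i hi => ?_
  rw [negMulLog, neg_mul, neg_le_neg_iff]
  rcases (ha i hi).eq_or_lt with h | h
  · simp [← h]
  · exact mul_le_mul_of_nonneg_left (log_le_log h (single_le_sum ha hi)) h.le

lemma negMulLog_le_neg_mul_log_add_sub {p q : ℝ} (hp : 0 ≤ p) (hq : 0 ≤ q)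
    (hpq : 0 < p → 0 < q) :
    negMulLog p ≤ -p * log q + (q - p) := by
  rcases hp.eq_or_lt with rfl | hp
  · simpa using hq
  have hq := hpq hp
  have h := mul_le_mul_of_nonneg_left (log_le_sub_one_of_pos (div_pos hq hp)) hp.le
  rw [log_div hq.ne' hp.ne', mul_sub, mul_sub, mul_div_cancel₀ _ hp.ne'] at h
  rw [negMulLog]
  linarith

/-- Gibbs' inequality. -/
lemma sum_negMulLog_le_sum_neg_mul_log {ι : Type*} (s : Finset ι) {p q : ι → ℝ}
    (hp : ∀ i ∈ s, 0 ≤ p i) (hq : ∀ i ∈ s, 0 ≤ q i) (hpq : ∀ i ∈ s, 0 < p i → 0 < q i)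
    (hsum : ∑ i ∈ s, q i ≤ ∑ i ∈ s, p i) :
    ∑ i ∈ s, negMulLog (p i) ≤ ∑ i ∈ s, -p i * log (q i) :=
  calc ∑ i ∈ s, negMulLog (p i) ≤ ∑ i ∈ s, (-p i * log (q i) + (q i - p i)) :=
        sum_le_sum fun i hi => negMulLog_le_neg_mul_log_add_sub (hp i hi) (hq i hi) (hpq i hi)
    _ ≤ ∑ i ∈ s, -p i * log (q i) := by
        rw [sum_add_distrib, sum_sub_distrib]
        linarith

lemma sum_negMulLog_le_add_marginals {S T : Type*} [Fintype S] [Fintype T] {p : S × T → ℝ}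
    (hp : ∀ z, 0 ≤ p z) (hsum : ∑ z, p z = 1) :
    ∑ z, negMulLog (p z) ≤ ∑ x, negMulLog (∑ y, p (x, y)) + ∑ y, negMulLog (∑ x, p (x, y)) := by
  set a : S → ℝ := fun x => ∑ y, p (x, y)
  set b : T → ℝ := fun y => ∑ x, p (x, y)
  have ha : ∀ z, p z ≤ a z.1 := fun z => single_le_sum (fun y _ => hp (z.1, y)) (mem_univ z.2)
  have hb : ∀ z, p z ≤ b z.2 :=
    fun z => single_le_sum (f := fun x => p (x, z.2)) (fun x _ => hp (x, z.2)) (mem_univ z.1)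
  have hab_sum : ∑ z : S × T, a z.1 * b z.2 = 1 := by
    rw [Fintype.sum_prod_type, ← Fintype.sum_mul_sum, ← Fintype.sum_prod_type,
      ← Fintype.sum_prod_type_right, hsum, one_mul]
  have log_split : ∀ z, -p z * log (a z.1 * b z.2) = -p z * log (a z.1) + -p z * log (b z.2) := by
    intro z
    rcases (hp z).eq_or_lt with h | h
    · simp [← h]
    · rw [log_mul (h.trans_le (ha z)).ne' (h.trans_le (hb z)).ne', mul_add]
  calc ∑ z, negMulLog (p z) ≤ ∑ z, -p z * log (a z.1 * b z.2) :=
        sum_negMulLog_le_sum_neg_mul_log _ (fun z _ => hp z)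
          (fun z _ => mul_nonneg ((hp z).trans (ha z)) ((hp z).trans (hb z)))
          (fun z _ h => mul_pos (h.trans_le (ha z)) (h.trans_le (hb z))) (by rw [hab_sum, hsum])
    _ = ∑ x, negMulLog (a x) + ∑ y, negMulLog (b y) := by
        simp only [log_split, sum_add_distrib, negMulLog, neg_mul, sum_neg_distrib]
        rw [Fintype.sum_prod_type, Fintype.sum_prod_type_right]
        simp only [a, b, sum_mul]

section MeasureEntropy

variable {S T : Type*} [MeasurableSpace S] [MeasurableSpace T]

noncomputable def measureEntropy [Fintype S] (ν : Measure S) : ℝ := ∑ s, negMulLog (ν.real {s})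

variable [MeasurableSingletonClass S] [MeasurableSingletonClass T]

lemma measureReal_map_fst_singleton [Fintype T] (ν : Measure (S × T)) [IsFiniteMeasure ν]
    (x : S) :
    (ν.map Prod.fst).real {x} = ∑ y, ν.real {(x, y)} := by
  rw [map_measureReal_apply measurable_fst (measurableSet_singleton x)]
  have : Prod.fst ⁻¹' {x} = (({x} ×ˢ univ : Finset (S × T)) : Set (S × T)) := by
    ext ⟨a, b⟩; simp [eq_comm]
  rw [this, ← sum_measureReal_singleton, sum_product, sum_singleton]

lemma measureReal_map_snd_singleton [Fintype S] (ν : Measure (S × T)) [IsFiniteMeasure ν]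
    (y : T) :
    (ν.map Prod.snd).real {y} = ∑ x, ν.real {(x, y)} := by
  rw [map_measureReal_apply measurable_snd (measurableSet_singleton y)]
  have : Prod.snd ⁻¹' {y} = ((univ ×ˢ {y} : Finset (S × T)) : Set (S × T)) := by
    ext ⟨a, b⟩; simp [eq_comm]
  rw [this, ← sum_measureReal_singleton, sum_product, sum_congr rfl fun x _ => sum_singleton _ _]

variable [Fintype S] [Fintype T]

lemma measureEntropy_map_of_injective (ν : Measure S) {f : S → T} (hf : Function.Injective f) :
    measureEntropy (ν.map f) = measureEntropy ν := by
  have hfm := measurable_of_finite f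
  refine (Fintype.sum_of_injective f hf _ _ (fun t ht => ?_) (fun s => ?_)).symm
  · rw [map_measureReal_apply hfm (measurableSet_singleton t),
      Set.preimage_singleton_eq_empty.2 ht, measureReal_empty, negMulLog_zero]
  · rw [map_measureReal_apply hfm (measurableSet_singleton _), ← Set.image_singleton,
      hf.preimage_image]

lemma measureEntropy_map_fst_le (ν : Measure (S × T)) [IsFiniteMeasure ν] :
    measureEntropy (ν.map Prod.fst) ≤ measureEntropy ν := by
  simp only [measureEntropy, measureReal_map_fst_singleton, Fintype.sum_prod_type]
  exact sum_le_sum fun x _ => negMulLog_sum_le _ fun y _ => measureReal_nonneg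

lemma measureEntropy_le_map_fst_add_map_snd (ν : Measure (S × T)) [IsProbabilityMeasure ν] :
    measureEntropy ν ≤ measureEntropy (ν.map Prod.fst) + measureEntropy (ν.map Prod.snd) := by
  simp only [measureEntropy, measureReal_map_fst_singleton, measureReal_map_snd_singleton]
  refine sum_negMulLog_le_add_marginals (fun _ => measureReal_nonneg) ?_
  rw [sum_measureReal_singleton, coe_univ, probReal_univ]

end MeasureEntropy

section Entropy

variable {Ω : Type*} [MeasurableSpace Ω] {μ : Measure Ω}
  {S T R : Type*} [MeasurableSpace S] [MeasurableSpace T] [MeasurableSpace R]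

lemma map_pair_map_fst {X : Ω → S} {Y : Ω → T} (hX : Measurable X) (hY : Measurable Y) :
    (μ.map fun ω => (X ω, Y ω)).map Prod.fst = μ.map X := by
  rw [Measure.map_map measurable_fst (hX.prodMk hY)]
  rfl

lemma map_pair_map_snd {X : Ω → S} {Y : Ω → T} (hX : Measurable X) (hY : Measurable Y) :
    (μ.map fun ω => (X ω, Y ω)).map Prod.snd = μ.map Y := by
  rw [Measure.map_map measurable_snd (hX.prodMk hY)]
  rfl

variable [Fintype S] [Fintype T] [Fintype R]

lemma ent_eq_measureEntropy (X : Ω → S) : ent μ X = measureEntropy (μ.map X) := rfl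

lemma ent_comp_of_injective [MeasurableSingletonClass S] [MeasurableSingletonClass T]
    {X : Ω → S} (hX : Measurable X) {f : S → T} (hf : Function.Injective f) :
    ent μ (f ∘ X) = ent μ X := by
  rw [ent_eq_measureEntropy, ← Measure.map_map (measurable_of_finite f) hX,
    measureEntropy_map_of_injective _ hf, ent_eq_measureEntropy]

lemma ent_pair_comm [MeasurableSingletonClass S] [MeasurableSingletonClass T]
    {X : Ω → S} {Y : Ω → T} (hX : Measurable X) (hY : Measurable Y) :
    ent μ (fun ω => (X ω, Y ω)) = ent μ (fun ω => (Y ω, X ω)) :=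
  (ent_comp_of_injective (hX.prodMk hY) Prod.swap_injective).symm

lemma ent_pair_assoc [MeasurableSingletonClass S] [MeasurableSingletonClass T]
    [MeasurableSingletonClass R] {X : Ω → S} {Y : Ω → T} {Z : Ω → R}
    (hX : Measurable X) (hY : Measurable Y) (hZ : Measurable Z) :
    ent μ (fun ω => (X ω, Y ω, Z ω)) = ent μ (fun ω => ((X ω, Y ω), Z ω)) :=
  (ent_comp_of_injective (hX.prodMk (hY.prodMk hZ)) (Equiv.prodAssoc S T R).symm.injective).symm

lemma ent_le_ent_pair [IsFiniteMeasure μ] [MeasurableSingletonClass S]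
    [MeasurableSingletonClass T] {X : Ω → S} {Y : Ω → T} (hX : Measurable X) (hY : Measurable Y) :
    ent μ X ≤ ent μ (fun ω => (X ω, Y ω)) := by
  rw [ent_eq_measureEntropy, ent_eq_measureEntropy, ← map_pair_map_fst hX hY]
  exact measureEntropy_map_fst_le _

lemma ent_pair_le_add [IsProbabilityMeasure μ] [MeasurableSingletonClass S]
    [MeasurableSingletonClass T] {X : Ω → S} {Y : Ω → T} (hX : Measurable X) (hY : Measurable Y) :
    ent μ (fun ω => (X ω, Y ω)) ≤ ent μ X + ent μ Y := by
  have := Measure.isProbabilityMeasure_map (μ := μ) (hX.prodMk hY).aemeasurable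
  rw [ent_eq_measureEntropy, ent_eq_measureEntropy, ent_eq_measureEntropy,
    ← map_pair_map_fst hX hY, ← map_pair_map_snd hX hY]
  exact measureEntropy_le_map_fst_add_map_snd _

lemma ent_le_of_condEnt_eq_zero [IsFiniteMeasure μ] [MeasurableSingletonClass S]
    [MeasurableSingletonClass T] {X : Ω → S} {Y : Ω → T} (hX : Measurable X) (hY : Measurable Y)
    (h : condEnt μ X Y = 0) : ent μ X ≤ ent μ Y := by
  rw [condEnt, sub_eq_zero] at h
  exact h ▸ ent_le_ent_pair hX hY

end Entropy

theorem stmt_3_general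
    {Ω : Type*} [MeasurableSpace Ω] (μ : Measure Ω) [IsProbabilityMeasure μ]
    {SS SZ S1 S2 SU SV : Type*}
    [Fintype SS] [MeasurableSpace SS] [MeasurableSingletonClass SS]
    [Fintype SZ] [MeasurableSpace SZ] [MeasurableSingletonClass SZ]
    [Fintype S1] [MeasurableSpace S1] [MeasurableSingletonClass S1]
    [Fintype S2] [MeasurableSpace S2] [MeasurableSingletonClass S2]
    [Fintype SU] [MeasurableSpace SU] [MeasurableSingletonClass SU]
    [Fintype SV] [MeasurableSpace SV] [MeasurableSingletonClass SV]
    (S : Ω → SS) (Z : Ω → SZ) (W₁ : Ω → S1) (W₂ : Ω → S2) (U : Ω → SU) (V : Ω → SV)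
    (hS : Measurable S) (hZ : Measurable Z) (hW₁ : Measurable W₁) (hW₂ : Measurable W₂)
    (hU : Measurable U) (hV : Measurable V)
    (t : ℝ)
    (hdec : condEnt μ S (fun ω => (W₁ ω, W₂ ω, Z ω)) = 0)
    (hrate : ent μ S ≥ ent μ Z + 2 * t)
    (hWfun : condEnt μ (fun ω => (W₁ ω, W₂ ω)) (fun ω => (U ω, V ω)) = 0)
    (hUV : ent μ (fun ω => (U ω, V ω)) ≤ 2 * t) :
    ent μ (fun ω => (W₁ ω, W₂ ω)) = 2 * t ∧
      ent μ (fun ω => (U ω, V ω)) = 2 * t ∧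
      condEnt μ (fun ω => (U ω, V ω)) (fun ω => (W₁ ω, W₂ ω)) = 0 := by
  have hW := hW₁.prodMk hW₂
  have hS_le : ent μ S ≤ ent μ (fun ω => (W₁ ω, W₂ ω, Z ω)) :=
    ent_le_of_condEnt_eq_zero hS (hW₁.prodMk (hW₂.prodMk hZ)) hdec
  have hWZ_le : ent μ (fun ω => (W₁ ω, W₂ ω, Z ω)) ≤ ent μ (fun ω => (W₁ ω, W₂ ω)) + ent μ Z :=
    (ent_pair_assoc hW₁ hW₂ hZ).trans_le (ent_pair_le_add hW hZ)
  have hW_le : ent μ (fun ω => (W₁ ω, W₂ ω)) ≤ ent μ (fun ω => (U ω, V ω)) :=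
    ent_le_of_condEnt_eq_zero hW (hU.prodMk hV) hWfun
  have hW_eq : ent μ (fun ω => (W₁ ω, W₂ ω)) = 2 * t := by linarith
  refine ⟨hW_eq, by linarith, ?_⟩
  rw [condEnt, sub_eq_zero] at hWfun ⊢
  rw [← ent_pair_comm hW (hU.prodMk hV), hWfun]
  linarith

theorem stmt_3
    {Ω : Type*} [MeasurableSpace Ω] (μ : Measure Ω) [IsProbabilityMeasure μ]
    {SS SZ S1 S2 SU SV : Type*}
    [Fintype SS] [Nonempty SS] [MeasurableSpace SS] [MeasurableSingletonClass SS]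
    [Fintype SZ] [Nonempty SZ] [MeasurableSpace SZ] [MeasurableSingletonClass SZ]
    [Fintype S1] [Nonempty S1] [MeasurableSpace S1] [MeasurableSingletonClass S1]
    [Fintype S2] [Nonempty S2] [MeasurableSpace S2] [MeasurableSingletonClass S2]
    [Fintype SU] [Nonempty SU] [MeasurableSpace SU] [MeasurableSingletonClass SU]
    [Fintype SV] [Nonempty SV] [MeasurableSpace SV] [MeasurableSingletonClass SV]
    (S : Ω → SS) (Z : Ω → SZ) (W₁ : Ω → S1) (W₂ : Ω → S2) (U : Ω → SU) (V : Ω → SV)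
    (hS : Measurable S) (hZ : Measurable Z) (hW₁ : Measurable W₁) (hW₂ : Measurable W₂)
    (hU : Measurable U) (hV : Measurable V)
    (t : ℝ) (ht : 0 ≤ t)
    (hdec : condEnt μ S (fun ω => (W₁ ω, W₂ ω, Z ω)) = 0)
    (hrate : ent μ S ≥ ent μ Z + 2 * t)
    (hWfun : condEnt μ (fun ω => (W₁ ω, W₂ ω)) (fun ω => (U ω, V ω)) = 0)
    (hUV : ent μ (fun ω => (U ω, V ω)) ≤ 2 * t) :
    ent μ (fun ω => (W₁ ω, W₂ ω)) = 2 * t ∧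
      ent μ (fun ω => (U ω, V ω)) = 2 * t ∧
      condEnt μ (fun ω => (U ω, V ω)) (fun ω => (W₁ ω, W₂ ω)) = 0 :=
  stmt_3_general μ S Z W₁ W₂ U V hS hZ hW₁ hW₂ hU hV t hdec hrate hWfun hUV
end

section
/- Let K, W1, W3, W4 be random variables on a probability space with values in finite nonempty sets and let c be a real number. Suppose H(K | W1, W3) = 0, H(W4 | W1, W3) = 0, W1 is independent of the pair (K, W4) (i.e., I(W1 ; K, W4) = 0), H(W1) = H(K) = H(W4) = c, and H(W3) ≤ c. Then H(K, W4) = c, H(K | W4) = 0, and H(W4 | K) = 0 (the key K is a function of W4 and vice versa). -/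
open MeasureTheory ProbabilityTheory

/-!
As `K` and `W₄` are almost surely functions of `(W₁, W₃)`,
`H(W₁, K, W₄) ≤ H(W₁, W₃) ≤ H(W₁) + H(W₃) ≤ 2c`. Independence turns the left side into
`c + H(K, W₄)`, so `c = H(K) ≤ H(K, W₄) ≤ c`. Hence `H(K, W₄) = H(K) = H(W₄)`, which is to say
that both conditional entropies vanish.

The almost sure functional dependence comes from the equality case of
`negMulLog (∑ i, g i) ≤ ∑ i, negMulLog (g i)`, and subadditivity from Gibbs' inequality.
-/
open Real

namespace Real

lemma mul_log_le_mul_log_of_le {a b : ℝ} (ha : 0 ≤ a) (hab : a ≤ b) :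
    a * log a ≤ a * log b := by
  rcases ha.eq_or_lt with rfl | ha
  · simp
  · exact mul_le_mul_of_nonneg_left (log_le_log ha hab) ha.le

lemma eq_zero_or_eq_of_mul_log_eq {a b : ℝ} (ha : 0 ≤ a) (hab : a ≤ b)
    (h : a * log a = a * log b) : a = 0 ∨ a = b := by
  rcases ha.eq_or_lt with rfl | ha
  · exact Or.inl rfl
  · exact Or.inr (log_injOn_pos ha (ha.trans_le hab) (mul_left_cancel₀ ha.ne' h))

variable {ι : Type*} {s : Finset ι} {g : ι → ℝ}

lemma negMulLog_sum_le (hg : ∀ i ∈ s, 0 ≤ g i) :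
    negMulLog (∑ i ∈ s, g i) ≤ ∑ i ∈ s, negMulLog (g i) := by
  have key := Finset.sum_le_sum fun i hi ↦
    mul_log_le_mul_log_of_le (hg i hi) (Finset.single_le_sum hg hi)
  simp only [negMulLog, neg_mul, Finset.sum_neg_distrib, ← Finset.sum_mul] at key ⊢
  linarith

lemma eq_of_negMulLog_sum_eq (hg : ∀ i ∈ s, 0 ≤ g i)
    (h : ∑ i ∈ s, negMulLog (g i) = negMulLog (∑ i ∈ s, g i)) {i j : ι} (hi : i ∈ s) (hj : j ∈ s)
    (hgi : g i ≠ 0) (hgj : g j ≠ 0) : i = j := by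
  have hle : ∀ k ∈ s, g k * log (g k) ≤ g k * log (∑ l ∈ s, g l) := fun k hk ↦
    mul_log_le_mul_log_of_le (hg k hk) (Finset.single_le_sum hg hk)
  have hterm := (Finset.sum_eq_sum_iff_of_le hle).1 <| by
    simp only [negMulLog, neg_mul, Finset.sum_neg_distrib, ← Finset.sum_mul] at h ⊢
    linarith
  have hfull : ∀ k ∈ s, g k ≠ 0 → g k = ∑ l ∈ s, g l := fun k hk hgk ↦
    (eq_zero_or_eq_of_mul_log_eq (hg k hk) (Finset.single_le_sum hg hk)
      (hterm k hk)).resolve_left hgk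
  by_contra hij
  have hpair := Finset.add_le_sum hg hi hj hij
  exact hgj (le_antisymm (by linarith [hfull i hi hgi]) (hg j hj))

-- `log (a * b / r) ≤ a * b / r - 1`, multiplied by `r`.
lemma negMulLog_le_mul_sub_sub_mul_log {r a b : ℝ} (hr : 0 ≤ r) (hra : r ≤ a) (hrb : r ≤ b) :
    negMulLog r ≤ a * b - r - r * log a - r * log b := by
  rcases hr.eq_or_lt with rfl | hr
  · simpa using mul_nonneg hra hrb
  have ha := hr.trans_le hra
  have hb := hr.trans_le hrb
  have hlog := log_le_sub_one_of_pos (div_pos (mul_pos ha hb) hr)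
  rw [log_div (mul_pos ha hb).ne' hr.ne', log_mul ha.ne' hb.ne'] at hlog
  have := mul_le_mul_of_nonneg_left hlog hr.le
  have hcancel : r * (a * b / r - 1) = a * b - r := by field_simp
  rw [hcancel, mul_sub, mul_add] at this
  rw [negMulLog]
  linarith

end Real

noncomputable def measureEnt {S : Type*} [Fintype S] [MeasurableSpace S] (ν : Measure S) : ℝ :=
  ∑ s, negMulLog (ν.real {s})

section MeasureEnt

variable {S T : Type*} [Fintype S] [MeasurableSpace S] [MeasurableSingletonClass S]
  [MeasurableSpace T] [MeasurableSingletonClass T]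

lemma measureReal_map_singleton [DecidableEq T] (ν : Measure S) [IsFiniteMeasure ν] (f : S → T)
    (t : T) :
    (ν.map f).real {t} = ∑ s with f s = t, ν.real {s} := by
  have hfiber : f ⁻¹' {t} = ↑(Finset.univ.filter (f · = t)) := by ext; simp
  rw [map_measureReal_apply (measurable_of_finite f) (measurableSet_singleton t), hfiber,
    sum_measureReal_singleton]

lemma measureEnt_map_le [Fintype T] (ν : Measure S) [IsFiniteMeasure ν] (f : S → T) :
    measureEnt (ν.map f) ≤ measureEnt ν := by
  classical
  calc measureEnt (ν.map f) = ∑ t, negMulLog (∑ s with f s = t, ν.real {s}) := by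
        simp only [measureEnt, measureReal_map_singleton]
    _ ≤ ∑ t, ∑ s with f s = t, negMulLog (ν.real {s}) :=
        Finset.sum_le_sum fun _ _ ↦ negMulLog_sum_le fun _ _ ↦ measureReal_nonneg
    _ = measureEnt ν := Finset.sum_fiberwise _ f _

lemma exists_ae_eq_of_measureEnt_map_eq [Fintype T] [Nonempty S] (ν : Measure S)
    [IsFiniteMeasure ν] (f : S → T) (h : measureEnt (ν.map f) = measureEnt ν) :
    ∃ g : T → S, ∀ᵐ s ∂ν, g (f s) = s := by
  classical
  have hfiber : ∀ t, ∑ s with f s = t, negMulLog (ν.real {s})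
      = negMulLog (∑ s with f s = t, ν.real {s}) := by
    have hle : ∀ t ∈ Finset.univ, negMulLog (∑ s with f s = t, ν.real {s})
        ≤ ∑ s with f s = t, negMulLog (ν.real {s}) :=
      fun _ _ ↦ negMulLog_sum_le fun _ _ ↦ measureReal_nonneg
    have hsum := (Finset.sum_eq_sum_iff_of_le hle).1 <| by
      rw [Finset.sum_fiberwise (g := f)]
      simpa only [measureEnt, measureReal_map_singleton] using h
    exact fun t ↦ (hsum t (Finset.mem_univ t)).symm
  -- Equality in every fibre leaves at most one atom of `ν` per fibre; `g` picks it.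
  refine ⟨fun t ↦ if h : ∃ s, f s = t ∧ ν.real {s} ≠ 0 then h.choose else Classical.arbitrary S,
    ae_iff_of_countable.2 fun s hs ↦ ?_⟩
  have hs : ν.real {s} ≠ 0 := (measureReal_ne_zero_iff).2 hs
  have hex : ∃ s', f s' = f s ∧ ν.real {s'} ≠ 0 := ⟨s, rfl, hs⟩
  obtain ⟨hfs, hne⟩ := hex.choose_spec
  simp only [dif_pos hex]
  exact eq_of_negMulLog_sum_eq (fun _ _ ↦ measureReal_nonneg) (hfiber (f s))
    (by simpa using hfs) (by simp) hne hs

lemma measureEnt_le_map_fst_add_map_snd [Fintype T] (ν : Measure (S × T))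
    [IsProbabilityMeasure ν] :
    measureEnt ν ≤ measureEnt (ν.map Prod.fst) + measureEnt (ν.map Prod.snd) := by
  classical
  set r : S → T → ℝ := fun s t ↦ ν.real {(s, t)}
  set p : S → ℝ := fun s ↦ ∑ t, r s t
  set q : T → ℝ := fun t ↦ ∑ s, r s t
  have hr : ∀ s t, 0 ≤ r s t := fun _ _ ↦ measureReal_nonneg
  have hp : ∀ s, (ν.map Prod.fst).real {s} = p s := by
    intro s
    rw [measureReal_map_singleton, Finset.sum_filter, Fintype.sum_prod_type, Finset.sum_comm]
    simp [p, r]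
  have hq : ∀ t, (ν.map Prod.snd).real {t} = q t := by
    intro t
    rw [measureReal_map_singleton, Finset.sum_filter, Fintype.sum_prod_type]
    simp [q, r]
  have hr1 : ∑ s, ∑ t, r s t = 1 := by
    rw [← Fintype.sum_prod_type', sum_measureReal_singleton]; simp
  have hpq : ∑ s, ∑ t, p s * q t = 1 := by
    rw [← Finset.sum_mul_sum, hr1, Finset.sum_comm, hr1, one_mul]
  have hlp : ∑ s, ∑ t, r s t * log (p s) = ∑ s, p s * log (p s) := by
    simp only [← Finset.sum_mul]; rfl
  have hlq : ∑ s, ∑ t, r s t * log (q t) = ∑ t, q t * log (q t) := by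
    rw [Finset.sum_comm]; simp only [← Finset.sum_mul]; rfl
  calc measureEnt ν = ∑ s, ∑ t, negMulLog (r s t) := Fintype.sum_prod_type _
    _ ≤ ∑ s, ∑ t, (p s * q t - r s t - r s t * log (p s) - r s t * log (q t)) := by
        gcongr with s _ t _
        exact negMulLog_le_mul_sub_sub_mul_log (hr s t)
          (Finset.single_le_sum (fun t _ ↦ hr s t) (Finset.mem_univ t))
          (Finset.single_le_sum (fun s _ ↦ hr s t) (Finset.mem_univ s))
    _ = ∑ s, negMulLog (p s) + ∑ t, negMulLog (q t) := by
        simp only [Finset.sum_sub_distrib, hpq, hr1, hlp, hlq, negMulLog, neg_mul,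
          Finset.sum_neg_distrib]
        ring
    _ = measureEnt (ν.map Prod.fst) + measureEnt (ν.map Prod.snd) := by
        simp only [measureEnt, hp, hq]

end MeasureEnt

section RandomVariable

variable {Ω : Type*} [MeasurableSpace Ω] {μ : Measure Ω}
  {S T : Type*} [Fintype S] [MeasurableSpace S] [Fintype T] [MeasurableSpace T]
  {X : Ω → S} {Y : Ω → T}

lemma ent_congr_ae {X' : Ω → S} (h : X =ᵐ[μ] X') : ent μ X = ent μ X' := by
  simp only [ent, Measure.map_congr h]

variable [MeasurableSingletonClass S]

lemma ent_comp_eq (hX : Measurable X) (f : S → T) :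
    ent μ (fun ω ↦ f (X ω)) = measureEnt ((μ.map X).map f) := by
  rw [Measure.map_map (measurable_of_finite f) hX]
  rfl

variable [MeasurableSingletonClass T]

lemma ent_comp_le [IsFiniteMeasure μ] (hX : Measurable X) (f : S → T) :
    ent μ (fun ω ↦ f (X ω)) ≤ ent μ X := by
  rw [ent_comp_eq hX]
  exact measureEnt_map_le _ f

lemma ent_prod_le [IsProbabilityMeasure μ] (hX : Measurable X) (hY : Measurable Y) :
    ent μ (fun ω ↦ (X ω, Y ω)) ≤ ent μ X + ent μ Y := by
  have := Measure.isProbabilityMeasure_map (μ := μ) (hX.prodMk hY).aemeasurable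
  have hfst := ent_comp_eq (μ := μ) (hX.prodMk hY) Prod.fst
  have hsnd := ent_comp_eq (μ := μ) (hX.prodMk hY) Prod.snd
  simp only at hfst hsnd
  rw [hfst, hsnd]
  exact measureEnt_le_map_fst_add_map_snd _

lemma ent_prod_comm [IsFiniteMeasure μ] (hX : Measurable X) (hY : Measurable Y) :
    ent μ (fun ω ↦ (Y ω, X ω)) = ent μ (fun ω ↦ (X ω, Y ω)) :=
  le_antisymm (ent_comp_le (hX.prodMk hY) Prod.swap) (ent_comp_le (hY.prodMk hX) Prod.swap)

lemma exists_ae_eq_comp_of_condEnt_eq_zero [IsProbabilityMeasure μ] (hX : Measurable X)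
    (hY : Measurable Y) (h : condEnt μ X Y = 0) : ∃ g : T → S, X =ᵐ[μ] fun ω ↦ g (Y ω) := by
  have : Nonempty (S × T) := (nonempty_of_isProbabilityMeasure μ).map fun ω ↦ (X ω, Y ω)
  have hent : measureEnt ((μ.map fun ω ↦ (X ω, Y ω)).map Prod.snd)
      = measureEnt (μ.map fun ω ↦ (X ω, Y ω)) := by
    rw [← ent_comp_eq (hX.prodMk hY)]
    unfold condEnt at h
    exact (sub_eq_zero.1 h).symm
  obtain ⟨g, hg⟩ := exists_ae_eq_of_measureEnt_map_eq _ Prod.snd hent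
  refine ⟨fun t ↦ (g t).1, ?_⟩
  filter_upwards [ae_of_ae_map (hX.prodMk hY).aemeasurable hg] with ω hω
  exact (congrArg Prod.fst hω).symm

end RandomVariable

theorem stmt_10_general
    {Ω : Type*} [MeasurableSpace Ω] (μ : Measure Ω) [IsProbabilityMeasure μ]
    {SK S1 S3 S4 : Type*}
    [Fintype SK] [MeasurableSpace SK] [MeasurableSingletonClass SK]
    [Fintype S1] [MeasurableSpace S1] [MeasurableSingletonClass S1]
    [Fintype S3] [MeasurableSpace S3] [MeasurableSingletonClass S3]
    [Fintype S4] [MeasurableSpace S4] [MeasurableSingletonClass S4]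
    (K : Ω → SK) (W₁ : Ω → S1) (W₃ : Ω → S3) (W₄ : Ω → S4)
    (hK : Measurable K) (hW₁ : Measurable W₁) (hW₃ : Measurable W₃) (hW₄ : Measurable W₄)
    (c : ℝ)
    (hKfun : condEnt μ K (fun ω => (W₁ ω, W₃ ω)) = 0)
    (hW₄fun : condEnt μ W₄ (fun ω => (W₁ ω, W₃ ω)) = 0)
    (hind : mutInfo μ W₁ (fun ω => (K ω, W₄ ω)) = 0)
    (h1 : ent μ W₁ = c) (h2 : ent μ K = c) (h3 : ent μ W₄ = c)
    (h4 : ent μ W₃ ≤ c) :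
    ent μ (fun ω => (K ω, W₄ ω)) = c ∧
      condEnt μ K W₄ = 0 ∧ condEnt μ W₄ K = 0 := by
  have hZ := hW₁.prodMk hW₃
  obtain ⟨f, hf⟩ := exists_ae_eq_comp_of_condEnt_eq_zero hK hZ hKfun
  obtain ⟨g, hg⟩ := exists_ae_eq_comp_of_condEnt_eq_zero hW₄ hZ hW₄fun
  let F : S1 × S3 → S1 × (SK × S4) := fun z ↦ (z.1, (f z, g z))
  have hjoint : ent μ (fun ω ↦ (W₁ ω, (K ω, W₄ ω))) ≤ c + c :=
    calc ent μ (fun ω ↦ (W₁ ω, (K ω, W₄ ω)))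
        = ent μ (fun ω ↦ F (W₁ ω, W₃ ω)) := by
          refine ent_congr_ae ?_
          filter_upwards [hf, hg] with ω hfω hgω
          rw [hfω, hgω]
      _ ≤ ent μ (fun ω ↦ (W₁ ω, W₃ ω)) := ent_comp_le hZ F
      _ ≤ ent μ W₁ + ent μ W₃ := ent_prod_le hW₁ hW₃
      _ ≤ c + c := by linarith
  have hent : ent μ (fun ω ↦ (K ω, W₄ ω)) = c := by
    have hge := ent_comp_le (μ := μ) (hK.prodMk hW₄) Prod.fst
    unfold mutInfo at hind
    linarith
  refine ⟨hent, ?_, ?_⟩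
  · rw [condEnt, hent, h3, sub_self]
  · rw [condEnt, ent_prod_comm hK hW₄, hent, h2, sub_self]

theorem stmt_10
    {Ω : Type*} [MeasurableSpace Ω] (μ : Measure Ω) [IsProbabilityMeasure μ]
    {SK S1 S3 S4 : Type*}
    [Fintype SK] [Nonempty SK] [MeasurableSpace SK] [MeasurableSingletonClass SK]
    [Fintype S1] [Nonempty S1] [MeasurableSpace S1] [MeasurableSingletonClass S1]
    [Fintype S3] [Nonempty S3] [MeasurableSpace S3] [MeasurableSingletonClass S3]
    [Fintype S4] [Nonempty S4] [MeasurableSpace S4] [MeasurableSingletonClass S4]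
    (K : Ω → SK) (W₁ : Ω → S1) (W₃ : Ω → S3) (W₄ : Ω → S4)
    (hK : Measurable K) (hW₁ : Measurable W₁) (hW₃ : Measurable W₃) (hW₄ : Measurable W₄)
    (c : ℝ)
    (hKfun : condEnt μ K (fun ω => (W₁ ω, W₃ ω)) = 0)
    (hW₄fun : condEnt μ W₄ (fun ω => (W₁ ω, W₃ ω)) = 0)
    (hind : mutInfo μ W₁ (fun ω => (K ω, W₄ ω)) = 0)
    (h1 : ent μ W₁ = c) (h2 : ent μ K = c) (h3 : ent μ W₄ = c)
    (h4 : ent μ W₃ ≤ c) :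
    ent μ (fun ω => (K ω, W₄ ω)) = c ∧
      condEnt μ K W₄ = 0 ∧ condEnt μ W₄ K = 0 :=
  stmt_10_general μ K W₁ W₃ W₄ hK hW₁ hW₃ hW₄ c hKfun hW₄fun hind h1 h2 h3 h4
end
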